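/- arXiv:1011.3685 — 2 statements merged into one kernel-verified Lean document; each statement's English description precedes it below -/
import Mathlib

section
/- Let g be a uniformly Lipschitz generator. Then the following two conditions are equivalent. (a) There exists a constant C > 0 such that for all t ∈ [0,T], all y ∈ ℝⁿ and all z ∈ ℝ^{n×d}: −4⟨y⁻, g(t, y⁺, z)⟩ ≤ 2·∑_{k=1}^{n} 1_{y_k<0}·|z_k|² + C·|y⁻|². (b) For every k ∈ {1,…,n}, every t ∈ [0,T], every δ ∈ ℝⁿ with δ ≥ 0 and δ_k = 0, and every ζ ∈ ℝ^{n×d} with ζ_k = 0 (k-th row zero), one has g_k(t, δ, ζ) ≥ 0. (This is the deterministic core of the characterization of nonnegativity of solutions to multidimensional BSDEs.) -/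
open scoped RealInnerProductSpace

noncomputable section

/-- `ℝⁿ` with the Euclidean norm. -/
abbrev Vec (n : ℕ) := EuclideanSpace ℝ (Fin n)

/-- Real `n × d` matrices with the Frobenius norm. -/
abbrev Mat (n d : ℕ) := EuclideanSpace ℝ (Fin n × Fin d)

/-- The `k`-th row of a matrix. -/
def row {n d : ℕ} (z : Mat n d) (k : Fin n) : Vec d := WithLp.toLp 2 (fun j => z (k, j))

/-- Componentwise positive part. -/
def pos {n : ℕ} (x : Vec n) : Vec n := WithLp.toLp 2 (fun i => max (x i) 0)

/-- Componentwise negative part. -/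
def neg {n : ℕ} (x : Vec n) : Vec n := WithLp.toLp 2 (fun i => max (-(x i)) 0)

/-- A generator is uniformly Lipschitz on `[0,T]`. -/
def UniformlyLipschitz {n d : ℕ} (T : ℝ)
    (g : ℝ → Vec n → Mat n d → Vec n) : Prop :=
  ∃ L : ℝ, 0 ≤ L ∧ ∀ t ∈ Set.Icc (0:ℝ) T, ∀ y y' : Vec n, ∀ z z' : Mat n d,
    ‖g t y z - g t y' z'‖ ≤ L * (‖y - y'‖ + ‖z - z'‖)

/-!
(a) ⇒ (b): test (a) at `y = δ - ε eₖ` and `z = ζ`. Then `y⁺ = δ`, `y⁻ = ε eₖ`, and the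
indicator sum vanishes (row `k` of `ζ` is zero, the other `yᵢ` are nonnegative), so
`-4 ε gₖ(t, δ, ζ) ≤ C ε²` for every `ε > 0`, whence `gₖ(t, δ, ζ) ≥ 0`.

(b) ⇒ (a), coordinate by coordinate: where `yₖ < 0` we have `y⁺ₖ = 0`, so (b) applied to `y⁺`
and `z` with its `k`-th row erased gives a nonnegative value, and the Lipschitz bound in `z`
then yields `gₖ(t, y⁺, z) ≥ -L |zₖ|`. The inequality `4 a L r ≤ 2 r² + 2 L² a²` finishes it with
`C = 2 L² + 1`.
-/

lemma EuclideanSpace.real_inner_eq_sum {ι : Type*} [Fintype ι] (x y : EuclideanSpace ℝ ι) :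
    ⟪x, y⟫ = ∑ i, x i * y i := by
  simp [PiLp.inner_apply, mul_comm]

section PosNeg

variable {n : ℕ}

lemma neg_apply_nonneg (y : Vec n) (i : Fin n) : 0 ≤ neg y i := le_max_right _ _

lemma pos_apply_nonneg (y : Vec n) (i : Fin n) : 0 ≤ pos y i := le_max_right _ _

lemma pos_apply_eq_zero {y : Vec n} {i : Fin n} (h : y i ≤ 0) : pos y i = 0 := max_eq_right h

lemma neg_apply_eq_zero {y : Vec n} {i : Fin n} (h : 0 ≤ y i) : neg y i = 0 :=
  max_eq_right (neg_nonpos.mpr h)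

variable {δ : Vec n} {k : Fin n} {ε : ℝ}

lemma pos_sub_single (hδ : ∀ i, 0 ≤ δ i) (hδk : δ k = 0) (hε : 0 ≤ ε) :
    pos (δ - EuclideanSpace.single k ε) = δ := by
  ext i
  by_cases hik : i = k
  · subst hik
    simp [pos, hδk, hε]
  · simp [pos, hik, hδ i]

lemma neg_sub_single (hδ : ∀ i, 0 ≤ δ i) (hδk : δ k = 0) (hε : 0 ≤ ε) :
    neg (δ - EuclideanSpace.single k ε) = EuclideanSpace.single k ε := by
  ext i
  by_cases hik : i = k
  · subst hik
    simp [neg, hδk, hε]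
  · simp [neg, hik, hδ i]

end PosNeg

section Rows

variable {n d : ℕ}

def zeroRow (z : Mat n d) (k : Fin n) : Mat n d :=
  WithLp.toLp 2 (fun p => if p.1 = k then 0 else z p)

lemma row_zeroRow_self (z : Mat n d) (k : Fin n) : row (zeroRow z k) k = 0 := by
  ext j
  simp [row, zeroRow]

lemma norm_sub_zeroRow (z : Mat n d) (k : Fin n) : ‖z - zeroRow z k‖ = ‖row z k‖ := by
  have hsq : ‖z - zeroRow z k‖ ^ 2 = ‖row z k‖ ^ 2 := by
    rw [EuclideanSpace.real_norm_sq_eq, EuclideanSpace.real_norm_sq_eq, Fintype.sum_prod_type,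
      Finset.sum_eq_single k]
    · simp [zeroRow, row]
    · intro i _ hik
      simp [zeroRow, hik]
    · simp
  exact (sq_eq_sq₀ (norm_nonneg _) (norm_nonneg _)).mp hsq

end Rows

section Criterion

variable {n d : ℕ}

def NegPartEstimate (C : ℝ) (f : Vec n → Mat n d → Vec n) : Prop :=
  ∀ y : Vec n, ∀ z : Mat n d,
    -4 * ⟪neg y, f (pos y) z⟫ ≤
      2 * ∑ k : Fin n, (if y k < 0 then (1:ℝ) else 0) * ‖row z k‖ ^ 2 + C * ‖neg y‖ ^ 2

def InwardOnOrthantBoundary (f : Vec n → Mat n d → Vec n) : Prop :=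
  ∀ k : Fin n, ∀ δ : Vec n, (∀ i, 0 ≤ δ i) → δ k = 0 →
    ∀ ζ : Mat n d, row ζ k = 0 → 0 ≤ f δ ζ k

lemma nonneg_of_forall_pos_le_sq {G C : ℝ} (hC : 0 < C)
    (h : ∀ ε > 0, -4 * (ε * G) ≤ C * ε ^ 2) : 0 ≤ G := by
  refine le_of_forall_pos_le_add fun η hη => ?_
  have hε : 0 < η / (4 * C) := by positivity
  have := h _ hε
  field_simp at this
  nlinarith

lemma NegPartEstimate.inwardOnOrthantBoundary {C : ℝ} {f : Vec n → Mat n d → Vec n}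
    (hC : 0 < C) (hf : NegPartEstimate C f) : InwardOnOrthantBoundary f := by
  intro k δ hδ hδk ζ hζ
  refine nonneg_of_forall_pos_le_sq hC fun ε hε => ?_
  have h := hf (δ - EuclideanSpace.single k ε) ζ
  have hrows : ∑ i : Fin n, (if (δ - EuclideanSpace.single k ε) i < 0 then (1:ℝ) else 0) *
      ‖row ζ i‖ ^ 2 = 0 := by
    refine Finset.sum_eq_zero fun i _ => ?_
    by_cases hik : i = k
    · simp [hik, hζ]
    · simp [hik, hδ i]
  rw [pos_sub_single hδ hδk hε.le, neg_sub_single hδ hδk hε.le, hrows,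
    EuclideanSpace.inner_single_left, PiLp.norm_single] at h
  simpa [abs_of_pos hε] using h

lemma neg_four_mul_le_of_ge {a G L r : ℝ} (ha : 0 ≤ a) (hG : -(L * r) ≤ G) :
    -4 * (a * G) ≤ 2 * r ^ 2 + (2 * L ^ 2 + 1) * a ^ 2 := by
  nlinarith [sq_nonneg (r - L * a), sq_nonneg a, mul_le_mul_of_nonneg_left hG ha]

lemma negPartEstimate_of_inwardOnOrthantBoundary {L : ℝ} {f : Vec n → Mat n d → Vec n}
    (hL : ∀ y z z', ‖f y z - f y z'‖ ≤ L * ‖z - z'‖) (hf : InwardOnOrthantBoundary f) :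
    NegPartEstimate (2 * L ^ 2 + 1) f := by
  intro y z
  have hcoord : ∀ k, -4 * (neg y k * f (pos y) z k) ≤
      2 * ((if y k < 0 then (1:ℝ) else 0) * ‖row z k‖ ^ 2) + (2 * L ^ 2 + 1) * neg y k ^ 2 := by
    intro k
    by_cases hk : y k < 0
    · have hinward : 0 ≤ f (pos y) (zeroRow z k) k :=
        hf k (pos y) (pos_apply_nonneg y) (pos_apply_eq_zero hk.le) _ (row_zeroRow_self z k)
      have hlip : |f (pos y) z k - f (pos y) (zeroRow z k) k| ≤ L * ‖row z k‖ :=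
        calc _ = ‖(f (pos y) z - f (pos y) (zeroRow z k)) k‖ := by simp
          _ ≤ ‖f (pos y) z - f (pos y) (zeroRow z k)‖ := PiLp.norm_apply_le _ k
          _ ≤ L * ‖row z k‖ := by simpa [norm_sub_zeroRow] using hL (pos y) z (zeroRow z k)
      have hlower : -(L * ‖row z k‖) ≤ f (pos y) z k := by linarith [(abs_le.mp hlip).1]
      simpa [hk] using neg_four_mul_le_of_ge (neg_apply_nonneg y k) hlower
    · simp [neg_apply_eq_zero (not_lt.mp hk), hk]
  rw [EuclideanSpace.real_inner_eq_sum, EuclideanSpace.real_norm_sq_eq, Finset.mul_sum,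
    Finset.mul_sum, Finset.mul_sum, ← Finset.sum_add_distrib]
  exact Finset.sum_le_sum fun k _ => hcoord k

end Criterion

theorem nonnegativity_criterion_general
    {n d : ℕ} (T : ℝ)
    (g : ℝ → Vec n → Mat n d → Vec n) (hg : UniformlyLipschitz T g) :
    (∃ C : ℝ, 0 < C ∧ ∀ t ∈ Set.Icc (0:ℝ) T, ∀ y : Vec n, ∀ z : Mat n d,
        -4 * ⟪neg y, g t (pos y) z⟫ ≤
          2 * ∑ k : Fin n, (if y k < 0 then (1:ℝ) else 0) * ‖row z k‖ ^ 2
            + C * ‖neg y‖ ^ 2)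
    ↔
    (∀ k : Fin n, ∀ t ∈ Set.Icc (0:ℝ) T, ∀ δ : Vec n,
        (∀ i, 0 ≤ δ i) → δ k = 0 →
        ∀ ζ : Mat n d, row ζ k = 0 → 0 ≤ g t δ ζ k) := by
  constructor
  · rintro ⟨C, hC, hest⟩ k t ht
    exact NegPartEstimate.inwardOnOrthantBoundary hC (hest t ht) k
  · intro hinward
    obtain ⟨L, -, hL⟩ := hg
    refine ⟨2 * L ^ 2 + 1, by positivity, fun t ht => ?_⟩
    refine negPartEstimate_of_inwardOnOrthantBoundary (fun y z z' => ?_)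
      fun k => hinward k t ht
    simpa using hL t ht y y z z'

/-- the deterministic core of the characterization of nonnegativity of
solutions to multidimensional BSDEs. -/
theorem nonnegativity_criterion
    {n d : ℕ} (hn : 0 < n) (hd : 0 < d) (T : ℝ) (hT : 0 < T)
    (g : ℝ → Vec n → Mat n d → Vec n) (hg : UniformlyLipschitz T g) :
    (∃ C : ℝ, 0 < C ∧ ∀ t ∈ Set.Icc (0:ℝ) T, ∀ y : Vec n, ∀ z : Mat n d,
        -4 * ⟪neg y, g t (pos y) z⟫ ≤
          2 * ∑ k : Fin n, (if y k < 0 then (1:ℝ) else 0) * ‖row z k‖ ^ 2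
            + C * ‖neg y‖ ^ 2)
    ↔
    (∀ k : Fin n, ∀ t ∈ Set.Icc (0:ℝ) T, ∀ δ : Vec n,
        (∀ i, 0 ≤ δ i) → δ k = 0 →
        ∀ ζ : Mat n d, row ζ k = 0 → 0 ≤ g t δ ζ k) :=
  nonnegativity_criterion_general T g hg
end
end

section
/- Let g be a uniformly Lipschitz generator and fix a constant vector a ∈ ℝⁿ. Then the following two conditions are equivalent. (a) There exists a constant C > 0 such that for all t ∈ [0,T], all y ∈ ℝⁿ and all z ∈ ℝ^{n×d}: 4⟨y, g(t, a, z)⟩ ≤ 2·∑_{k=1}^{n} |z_k|² + C·|y|². (b) g(t, a, 0) = 0 for all t ∈ [0,T]. (This is the deterministic core of the constancy property of the multidimensional conditional g-expectation at the constant a: the solution of the BSDE with terminal value a is identically a if and only if (b) holds.) -/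
open scoped RealInnerProductSpace

noncomputable section

/-! At `z = 0` condition (a) reads `⟪y, g t a 0⟫ ≤ (C/4) ‖y‖²` for every `y`, and a linear
functional dominated by a quadratic vanishes. Conversely, if `g t a 0 = 0` then Lipschitz
continuity gives `‖g t a z‖ ≤ L ‖z‖`, and (a) with `C = 2L² + 1` follows from Cauchy–Schwarz and
`4 L ‖y‖ ‖z‖ ≤ 2 ‖z‖² + 2 L² ‖y‖²`. -/

theorem sum_norm_row_sq {n d : ℕ} (z : Mat n d) : ∑ k : Fin n, ‖row z k‖ ^ 2 = ‖z‖ ^ 2 := by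
  simp only [EuclideanSpace.norm_sq_eq, row, Fintype.sum_prod_type]

theorem eq_zero_of_forall_inner_le_mul_norm_sq {E : Type*} [NormedAddCommGroup E]
    [InnerProductSpace ℝ E] {v : E} {C : ℝ} (h : ∀ y : E, ⟪y, v⟫ ≤ C * ‖y‖ ^ 2) : v = 0 := by
  set K := max C 1
  have hK : 0 < K := lt_max_of_lt_right one_pos
  -- testing against `y = (2K)⁻¹ • v` gives `‖v‖² / (2K) ≤ ‖v‖² / (4K)`
  have htest := (h ((2 * K)⁻¹ • v)).trans
    (mul_le_mul_of_nonneg_right (le_max_left C 1) (sq_nonneg _))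
  rw [real_inner_smul_left, real_inner_self_eq_norm_sq, norm_smul, mul_pow,
    Real.norm_of_nonneg (by positivity)] at htest
  have hv : ‖v‖ ^ 2 ≤ 0 := by
    field_simp at htest
    nlinarith
  simpa using hv

theorem four_inner_le_of_norm_le {E : Type*} [NormedAddCommGroup E] [InnerProductSpace ℝ E]
    {y w : E} {L r : ℝ} (hw : ‖w‖ ≤ L * r) :
    4 * ⟪y, w⟫ ≤ 2 * r ^ 2 + 2 * L ^ 2 * ‖y‖ ^ 2 :=
  calc 4 * ⟪y, w⟫ ≤ 4 * (‖y‖ * (L * r)) := by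
        gcongr
        exact (real_inner_le_norm y w).trans (by gcongr)
    _ ≤ 2 * r ^ 2 + 2 * L ^ 2 * ‖y‖ ^ 2 := by nlinarith [sq_nonneg (r - L * ‖y‖)]

theorem constancy_criterion_general
    {n d : ℕ} (T : ℝ)
    (g : ℝ → Vec n → Mat n d → Vec n) (hg : UniformlyLipschitz T g) (a : Vec n) :
    (∃ C : ℝ, 0 < C ∧ ∀ t ∈ Set.Icc (0:ℝ) T, ∀ y : Vec n, ∀ z : Mat n d,
        4 * ⟪y, g t a z⟫ ≤ 2 * ∑ k : Fin n, ‖row z k‖ ^ 2 + C * ‖y‖ ^ 2)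
    ↔
    (∀ t ∈ Set.Icc (0:ℝ) T, g t a 0 = 0) := by
  constructor
  · rintro ⟨C, -, h⟩ t ht
    refine eq_zero_of_forall_inner_le_mul_norm_sq (C := C / 4) fun y => ?_
    have h0 := h t ht y 0
    rw [sum_norm_row_sq, norm_zero] at h0
    linarith
  · intro h0
    obtain ⟨L, -, hL⟩ := hg
    refine ⟨2 * L ^ 2 + 1, by positivity, fun t ht y z => ?_⟩
    have hgz : ‖g t a z‖ ≤ L * ‖z‖ := by simpa [h0 t ht] using hL t ht a a z 0
    rw [sum_norm_row_sq]
    linarith [four_inner_le_of_norm_le (y := y) hgz, sq_nonneg ‖y‖]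

/-- the deterministic core of the constancy property of the
multidimensional conditional `g`-expectation at a fixed constant `a`. -/
theorem constancy_criterion
    {n d : ℕ} (hn : 0 < n) (hd : 0 < d) (T : ℝ) (hT : 0 < T)
    (g : ℝ → Vec n → Mat n d → Vec n) (hg : UniformlyLipschitz T g) (a : Vec n) :
    (∃ C : ℝ, 0 < C ∧ ∀ t ∈ Set.Icc (0:ℝ) T, ∀ y : Vec n, ∀ z : Mat n d,
        4 * ⟪y, g t a z⟫ ≤ 2 * ∑ k : Fin n, ‖row z k‖ ^ 2 + C * ‖y‖ ^ 2)
    ↔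
    (∀ t ∈ Set.Icc (0:ℝ) T, g t a 0 = 0) :=
  constancy_criterion_general T g hg a
end
end
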